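/- In K₂ □ K₃ □ K₃ (vertices Fin 2 × Fin 3 × Fin 3 with Hamming distance), if y₁, y₂, y₃, ..., y₇ satisfy d(y_i,y_{i+1}) = 3 and d(y_i,y_{i+2}) ≥ 2 for all valid i, then y₇ = y₁. -/
import Mathlib


/-- Hamming distance on triples: the number of coordinates in which they differ. -/
def hdist {a b c : ℕ} (x y : Fin a × Fin b × Fin c) : ℕ :=
  (if x.1 = y.1 then 0 else 1) + (if x.2.1 = y.2.1 then 0 else 1) +
    (if x.2.2 = y.2.2 then 0 else 1)

lemma hdist_three {a b c : ℕ} {x y : Fin a × Fin b × Fin c} (h : hdist x y = 3) :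
    x.1 ≠ y.1 ∧ x.2.1 ≠ y.2.1 ∧ x.2.2 ≠ y.2.2 := by
  unfold hdist at h; split_ifs at h <;> simp_all

lemma hdist_two {a b c : ℕ} {x y : Fin a × Fin b × Fin c} (h : 2 ≤ hdist x y)
    (h0 : x.1 = y.1) : x.2.1 ≠ y.2.1 ∧ x.2.2 ≠ y.2.2 := by
  unfold hdist at h; split_ifs at h <;> simp_all

lemma fin2_trans : ∀ a b c : Fin 2, a ≠ b → b ≠ c → a = c := by decide

lemma fin3_det : ∀ a b c d : Fin 3, a ≠ b → b ≠ c → a ≠ c → d ≠ b → d ≠ c → d = a := by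
  intro a b c d
  fin_cases a <;> fin_cases b <;> fin_cases c <;> fin_cases d <;> simp

theorem seventh_eq_first (y : Fin 7 → Fin 2 × Fin 3 × Fin 3)
    (h1 : ∀ i : ℕ, ∀ h : i + 1 < 7, hdist (y ⟨i, by omega⟩) (y ⟨i + 1, h⟩) = 3)
    (h2 : ∀ i : ℕ, ∀ h : i + 2 < 7, 2 ≤ hdist (y ⟨i, by omega⟩) (y ⟨i + 2, h⟩)) :
    y 6 = y 0 := by
  have d0 := hdist_three (h1 0 (by omega))
  have d1 := hdist_three (h1 1 (by omega))
  have d2 := hdist_three (h1 2 (by omega))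
  have d3 := hdist_three (h1 3 (by omega))
  have d4 := hdist_three (h1 4 (by omega))
  have d5 := hdist_three (h1 5 (by omega))
  -- first coordinate equal at distance 2
  have c0 : (y 0).1 = (y 2).1 := fin2_trans _ _ _ d0.1 d1.1
  have c1 : (y 1).1 = (y 3).1 := fin2_trans _ _ _ d1.1 d2.1
  have c2 : (y 2).1 = (y 4).1 := fin2_trans _ _ _ d2.1 d3.1
  have c3 : (y 3).1 = (y 5).1 := fin2_trans _ _ _ d3.1 d4.1
  have c4 : (y 4).1 = (y 6).1 := fin2_trans _ _ _ d4.1 d5.1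
  have e0 := hdist_two (h2 0 (by omega)) c0
  have e1 := hdist_two (h2 1 (by omega)) c1
  have e2 := hdist_two (h2 2 (by omega)) c2
  have e3 := hdist_two (h2 3 (by omega)) c3
  have e4 := hdist_two (h2 4 (by omega)) c4
  -- second coordinate has period 3
  have a3 : (y 3).2.1 = (y 0).2.1 :=
    fin3_det _ _ _ _ d0.2.1 d1.2.1 e0.1 (e1.1 ∘ Eq.symm) (d2.2.1 ∘ Eq.symm)
  have a4 : (y 4).2.1 = (y 1).2.1 :=
    fin3_det _ _ _ _ d1.2.1 d2.2.1 e1.1 (e2.1 ∘ Eq.symm) (d3.2.1 ∘ Eq.symm)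
  have a5 : (y 5).2.1 = (y 2).2.1 :=
    fin3_det _ _ _ _ d2.2.1 d3.2.1 e2.1 (e3.1 ∘ Eq.symm) (d4.2.1 ∘ Eq.symm)
  have a6 : (y 6).2.1 = (y 3).2.1 :=
    fin3_det _ _ _ _ d3.2.1 d4.2.1 e3.1 (e4.1 ∘ Eq.symm) (d5.2.1 ∘ Eq.symm)
  -- third coordinate has period 3
  have b3 : (y 3).2.2 = (y 0).2.2 :=
    fin3_det _ _ _ _ d0.2.2 d1.2.2 e0.2 (e1.2 ∘ Eq.symm) (d2.2.2 ∘ Eq.symm)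
  have b4 : (y 4).2.2 = (y 1).2.2 :=
    fin3_det _ _ _ _ d1.2.2 d2.2.2 e1.2 (e2.2 ∘ Eq.symm) (d3.2.2 ∘ Eq.symm)
  have b5 : (y 5).2.2 = (y 2).2.2 :=
    fin3_det _ _ _ _ d2.2.2 d3.2.2 e2.2 (e3.2 ∘ Eq.symm) (d4.2.2 ∘ Eq.symm)
  have b6 : (y 6).2.2 = (y 3).2.2 :=
    fin3_det _ _ _ _ d3.2.2 d4.2.2 e3.2 (e4.2 ∘ Eq.symm) (d5.2.2 ∘ Eq.symm)
  have : (6 : Fin 7) = ⟨5 + 1, by omega⟩ := rfl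
  -- assemble
  refine Prod.ext ?_ (Prod.ext ?_ ?_)
  · show (y 6).1 = (y 0).1
    rw [← c4, ← c2, c0]
  · show (y 6).2.1 = (y 0).2.1
    rw [a6, a3]
  · show (y 6).2.2 = (y 0).2.2
    rw [b6, b3]
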